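/- In the proof setting of the single-dipped lemma: if (v_0, ..., v_n) is a simple path in a rooted cactus digraph and v_k ∈ C(v_0) but v_{k+1} ∉ C(v_0), then v_k ≺ v_{k+1} and v_{k+1} ≼ v_{k+2} ≼ ... ≼ v_n. -/

import Mathlib

structure DirGraph (V : Type) where
  Adj : V → V → Prop
  loopless : ∀ v, ¬ Adj v v

namespace DirGraph

variable {V V' : Type}

/-- A walk is a nonempty list of vertices with consecutive arcs. -/
def IsWalk (G : DirGraph V) : List V → Prop
  | [] => False
  | [_] => True
  | a :: b :: l => G.Adj a b ∧ G.IsWalk (b :: l)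

def IsWalkFromTo (G : DirGraph V) (p : List V) (x y : V) : Prop :=
  G.IsWalk p ∧ p.head? = some x ∧ p.getLast? = some y

def StronglyConnected (G : DirGraph V) : Prop :=
  ∀ x y : V, ∃ p, G.IsWalkFromTo p x y

def IsSimplePath (G : DirGraph V) (p : List V) : Prop :=
  G.IsWalk p ∧ p.Nodup

def IsSimplePathFromTo (G : DirGraph V) (p : List V) (x y : V) : Prop :=
  G.IsSimplePath p ∧ p.head? = some x ∧ p.getLast? = some y

/-- The arcs of a walk given as a list of vertices. -/
def arcs (p : List V) : List (V × V) := p.zip p.tail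

/-- The preterminal (second-to-last) vertex of a path. -/
def preterminal (p : List V) : Option V := p.dropLast.getLast?

/-- A simple cycle: a closed walk whose vertices are distinct except for the
repeated endpoint. -/
def IsSimpleCycle (G : DirGraph V) (p : List V) : Prop :=
  G.IsWalk p ∧ 2 ≤ p.length ∧ p.head? = p.getLast? ∧ p.dropLast.Nodup

/-- Two cycles are equal as cycles when they have the same set of arcs. -/
def CycleEquiv (p q : List V) : Prop :=
  ∀ a : V × V, a ∈ arcs p ↔ a ∈ arcs q

/-- Each arc lies in exactly one simple cycle (up to arc-set equality). -/
def CactusArcCond (G : DirGraph V) : Prop :=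
  ∀ x y, G.Adj x y →
    (∃ p, G.IsSimpleCycle p ∧ (x, y) ∈ arcs p) ∧
    (∀ p q, G.IsSimpleCycle p → (x, y) ∈ arcs p →
      G.IsSimpleCycle q → (x, y) ∈ arcs q → CycleEquiv p q)

/-- A cactus digraph: strongly connected and each arc lies in exactly one
simple cycle. -/
def IsCactus (G : DirGraph V) : Prop :=
  G.StronglyConnected ∧ G.CactusArcCond

noncomputable def inDeg (G : DirGraph V) (v : V) : ℕ := Nat.card {u // G.Adj u v}
noncomputable def outDeg (G : DirGraph V) (v : V) : ℕ := Nat.card {u // G.Adj v u}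

/-- A connecting point: a vertex shared by two distinct simple cycles. -/
def IsConnectingPoint (G : DirGraph V) (v : V) : Prop :=
  ∃ p q, G.IsSimpleCycle p ∧ G.IsSimpleCycle q ∧ ¬ CycleEquiv p q ∧ v ∈ p ∧ v ∈ q

/-- An expansion of digraphs. -/
structure IsExpansion (G' : DirGraph V') (G : DirGraph V) (φ : V' → V) : Prop where
  map_adj : ∀ ⦃x y⦄, G'.Adj x y → G.Adj (φ x) (φ y)
  vert_surj : Function.Surjective φ
  arc_surj : ∀ ⦃x y⦄, G.Adj x y → ∃ x' y', G'.Adj x' y' ∧ φ x' = x ∧ φ y' = y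
  lift : ∀ ⦃x y⦄, G.Adj x y → ∀ y', φ y' = y → ∃! x', G'.Adj x' y' ∧ φ x' = x

/-- A doubly bidirectionally connected pair. -/
def Dbcp (G : DirGraph V) (p q : V) : Prop :=
  p ≠ q ∧
  (∃ P Q, G.IsSimplePathFromTo P p q ∧ G.IsSimplePathFromTo Q p q ∧
    preterminal P ≠ preterminal Q) ∧
  (∃ P Q, G.IsSimplePathFromTo P q p ∧ G.IsSimplePathFromTo Q q p ∧
    preterminal P ≠ preterminal Q)

/-- Subgraph of a digraph: a vertex subset together with a subrelation of arcs
supported on it. -/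
structure Subgraph (G : DirGraph V) where
  verts : Set V
  Adj : V → V → Prop
  adj_sub : ∀ ⦃x y⦄, Adj x y → G.Adj x y
  mem_left : ∀ ⦃x y⦄, Adj x y → x ∈ verts
  mem_right : ∀ ⦃x y⦄, Adj x y → y ∈ verts

def Subgraph.toDirGraph {G : DirGraph V} (H : Subgraph G) : DirGraph V :=
  ⟨H.Adj, fun v h => G.loopless v (H.adj_sub h)⟩

/-- A sub-cactus digraph: a nonempty subgraph that is strongly connected (on
its vertex set) and in which each arc lies in exactly one simple cycle. -/
def Subgraph.IsCactus {G : DirGraph V} (H : Subgraph G) : Prop :=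
  H.verts.Nonempty ∧
  (∀ x ∈ H.verts, ∀ y ∈ H.verts, ∃ p, H.toDirGraph.IsWalkFromTo p x y) ∧
  H.toDirGraph.CactusArcCond

def Subgraph.inter {G : DirGraph V} (H K : Subgraph G) : Subgraph G where
  verts := H.verts ∩ K.verts
  Adj x y := H.Adj x y ∧ K.Adj x y
  adj_sub := fun _ _ h => H.adj_sub h.1
  mem_left := fun _ _ h => ⟨H.mem_left h.1, K.mem_left h.2⟩
  mem_right := fun _ _ h => ⟨H.mem_right h.1, K.mem_right h.2⟩

def Subgraph.le {G : DirGraph V} (H K : Subgraph G) : Prop :=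
  H.verts ⊆ K.verts ∧ ∀ ⦃x y⦄, H.Adj x y → K.Adj x y

/-- The single-vertex subgraph. -/
def singleVert (G : DirGraph V) (v : V) : Subgraph G where
  verts := {v}
  Adj _ _ := False
  adj_sub := by intro _ _ h; exact h.elim
  mem_left := by intro _ _ h; exact h.elim
  mem_right := by intro _ _ h; exact h.elim

/-- The intersection of all sub-cactus digraphs of `G` containing `W`. -/
def CsubOf (G : DirGraph V) (W : Set V) : Subgraph G where
  verts := {x | ∀ H : Subgraph G, H.IsCactus → W ⊆ H.verts → x ∈ H.verts}
  Adj x y := G.Adj x y ∧ ∀ H : Subgraph G, H.IsCactus → W ⊆ H.verts → H.Adj x y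
  adj_sub := fun _ _ h => h.1
  mem_left := fun _ _ h H hH hW => H.mem_left (h.2 H hH hW)
  mem_right := fun _ _ h H hH hW => H.mem_right (h.2 H hH hW)

open Classical in
/-- `C G r v`: the minimum sub-cactus digraph containing `{r, v}` (and the
single vertex `{r}` when `v = r`). -/
noncomputable def C (G : DirGraph V) (r v : V) : Subgraph G :=
  if v = r then singleVert G r else CsubOf G {r, v}

/-- The preorder on vertices of the rooted cactus digraph `(G, r)`:
`v ≼ w ↔ C(v) ⊆ C(w)`. -/
def pre (G : DirGraph V) (r v w : V) : Prop :=
  Subgraph.le (C G r v) (C G r w)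

end DirGraph

/-
By uniqueness of the simple cycle through an arc, a sub-cactus `K` of `G` contains every simple
cycle of `G` that uses one of its arcs. So if an arc `x → y` leaves `K`, no walk from `y` that
avoids `x` can reach `K` again: closing it up inside `K` back to `x` and shortcutting would give a
simple cycle through `x → y` whose last arc lies in `K`, forcing `y ∈ K`. In particular a
sub-cactus meets a simple path in an interval of indices.

Take a sub-cactus `K ⊇ C(v_0)` missing `v_{k+1}`. Since `C(v_k) ⊆ K`, we get
`¬ v_{k+1} ≼ v_k`. For `i ≥ k`, a sub-cactus `H` containing `r` and `v_{i+1}` but not `v_i`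
would miss `v_k` as well (interval property), and then `v_{k+1}, …, v_{i+1}` followed by a walk
inside `H` to `r ∈ K` would return to `K` avoiding `v_k`. Hence every such `H` contains `v_i`,
i.e. `v_i ≼ v_{i+1}`.
-/

theorem List.Nodup.getElem_notMem_drop {α : Type*} {l : List α} (hl : l.Nodup) {a : ℕ}
    (ha : a < l.length) : l[a] ∉ l.drop (a + 1) := by
  have h := hl.sublist (List.drop_sublist a l)
  rw [List.drop_eq_getElem_cons ha] at h
  exact (List.nodup_cons.1 h).1

namespace DirGraph

variable {V : Type} {G : DirGraph V}

@[simp] lemma arcs_cons_cons (a b : V) (l : List V) :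
    arcs (a :: b :: l) = (a, b) :: arcs (b :: l) := rfl

lemma mem_of_mem_arcs_right {l : List V} {a b : V} (h : (a, b) ∈ arcs l) : b ∈ l :=
  List.mem_of_mem_tail (List.of_mem_zip h).2

lemma mem_arcs_cons {e : V × V} {l : List V} (h : e ∈ arcs l) (a : V) : e ∈ arcs (a :: l) := by
  cases l with
  | nil => simp [arcs] at h
  | cons b t => simp [h]

lemma arcs_subset_arcs_append (s t : List V) : arcs t ⊆ arcs (s ++ t) := by
  induction s with
  | nil => exact List.Subset.refl _
  | cons a s ih => exact fun e he => mem_arcs_cons (ih he) a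

lemma arcs_append : ∀ {p q : List V}, p ≠ [] → p.getLast? = q.head? →
    arcs (p ++ q.tail) = arcs p ++ arcs q
  | [a], c :: t, _, h => by
      obtain rfl : a = c := by simpa using h
      simp [arcs]
  | [_], [], _, h => by simp at h
  | a :: b :: l, q, _, h => by
      have ih := arcs_append (p := b :: l) (q := q) (by simp) (by simpa using h)
      simp only [List.cons_append, arcs_cons_cons, List.cons.injEq, true_and]
      simpa using ih

lemma exists_mem_arcs_of_getLast? : ∀ {l : List V} {x : V}, 2 ≤ l.length →
    l.getLast? = some x → ∃ w, (w, x) ∈ arcs l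
  | [a, b], x, _, h => ⟨a, by simp_all⟩
  | a :: b :: c :: t, x, _, h => by
      obtain ⟨w, hw⟩ := exists_mem_arcs_of_getLast? (l := b :: c :: t) (by simp)
        (by simpa using h)
      exact ⟨w, mem_arcs_cons hw a⟩

lemma IsWalk.mono {G' : DirGraph V} (h : ∀ ⦃x y⦄, G.Adj x y → G'.Adj x y) :
    ∀ {l : List V}, G.IsWalk l → G'.IsWalk l
  | [_], _ => trivial
  | _ :: _ :: _, hw => ⟨h hw.1, IsWalk.mono h hw.2⟩

lemma IsWalk.adj_of_mem_arcs : ∀ {l : List V}, G.IsWalk l → ∀ {x y : V},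
    (x, y) ∈ arcs l → G.Adj x y
  | [_], _, _, _, h => by simp [arcs] at h
  | a :: b :: l, hw, x, y, h => by
      rcases List.mem_cons.1 h with h | h
      · obtain ⟨rfl, rfl⟩ := Prod.mk.inj h
        exact hw.1
      · exact hw.2.adj_of_mem_arcs h

lemma IsWalk.adj_getElem : ∀ {l : List V}, G.IsWalk l → ∀ {i : ℕ} (h : i + 1 < l.length),
    G.Adj (l[i]'(Nat.lt_of_succ_lt h)) l[i + 1]
  | _ :: _ :: _, hw, 0, _ => hw.1
  | _ :: _ :: _, hw, i + 1, h => hw.2.adj_getElem (i := i) (by simpa using h)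

lemma IsWalk.append : ∀ {p q : List V}, G.IsWalk p → G.IsWalk q →
    p.getLast? = q.head? → G.IsWalk (p ++ q.tail)
  | [a], c :: t, _, hq, h => by
      obtain rfl : a = c := by simpa using h
      simpa using hq
  | a :: b :: l, q, hp, hq, h => ⟨hp.1, hp.2.append hq (by simpa using h)⟩

lemma IsWalk.take : ∀ {l : List V} {n : ℕ}, G.IsWalk l → 0 < n → G.IsWalk (l.take n)
  | [_], _ + 1, hw, _ => by simpa using hw
  | _ :: _ :: _, 1, _, _ => trivial
  | _ :: _ :: _, n + 2, hw, _ => ⟨hw.1, hw.2.take (n := n + 1) n.succ_pos⟩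

lemma IsWalk.drop : ∀ {l : List V} {n : ℕ}, G.IsWalk l → n < l.length → G.IsWalk (l.drop n)
  | _, 0, hw, _ => hw
  | [_], _ + 1, _, h => by simp at h
  | _ :: _ :: _, n + 1, hw, h => hw.2.drop (n := n) (by simpa using h)

lemma IsWalk.of_append_right : ∀ {s t : List V}, G.IsWalk (s ++ t) → t ≠ [] → G.IsWalk t
  | [], _, h, _ => h
  | [_], _ :: _, h, _ => h.2
  | _ :: _ :: s, _, h, ht => IsWalk.of_append_right (s := _ :: s) h.2 ht

lemma IsWalk.isWalkFromTo_take_drop {p : List V} (hw : G.IsWalk p) {a b : ℕ} (hab : a ≤ b)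
    (hb : b < p.length) :
    G.IsWalkFromTo ((p.drop a).take (b + 1 - a)) p[a] p[b] := by
  refine ⟨(hw.drop (by omega)).take (by omega), ?_, ?_⟩
  · simp [List.head?_take, show b + 1 - a ≠ 0 by omega,
    List.getElem?_eq_getElem (show a < p.length by omega)]
  · rw [List.getLast?_take, if_neg (show b + 1 - a ≠ 0 by omega), List.getElem?_drop,
      show a + (b + 1 - a - 1) = b by omega, List.getElem?_eq_getElem hb]
    rfl

lemma IsWalkFromTo.mono {G' : DirGraph V} (h : ∀ ⦃x y⦄, G.Adj x y → G'.Adj x y)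
    {p : List V} {x y : V} (hp : G.IsWalkFromTo p x y) : G'.IsWalkFromTo p x y :=
  ⟨hp.1.mono h, hp.2⟩

lemma IsWalkFromTo.two_le_length {p : List V} {x y : V} (hp : G.IsWalkFromTo p x y)
    (hxy : x ≠ y) : 2 ≤ p.length := by
  match p, hp with
  | [a], ⟨_, ha, ha'⟩ =>
    exact absurd ((Option.some.inj ha).symm.trans (Option.some.inj ha')) hxy
  | _ :: _ :: _, _ => simp

lemma IsWalkFromTo.append {p q : List V} {x y z : V} (hp : G.IsWalkFromTo p x y)
    (hq : G.IsWalkFromTo q y z) : G.IsWalkFromTo (p ++ q.tail) x z := by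
  obtain ⟨hpw, hph, hpl⟩ := hp
  obtain ⟨hqw, hqh, hql⟩ := hq
  have hp0 : p ≠ [] := by rintro rfl; simp at hph
  refine ⟨hpw.append hqw (hpl.trans hqh.symm),
    by simpa [List.head?_append_of_ne_nil _ hp0], ?_⟩
  match q, hqh, hql with
  | [c], hc, hl =>
    simp only [List.head?_cons, List.getLast?_singleton, Option.some.injEq] at hc hl
    subst hc hl
    simpa using hpl
  | c :: d :: t, _, hl => rwa [List.tail_cons, List.getLast?_append_of_ne_nil _ (by simp)]

lemma IsWalkFromTo.exists_isSimplePathFromTo : ∀ {W : List V} {x y : V},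
    G.IsWalkFromTo W x y → ∃ P, G.IsSimplePathFromTo P x y ∧ arcs P ⊆ arcs W
  | [a], _, _, hW => ⟨[a], ⟨⟨trivial, List.nodup_singleton a⟩, hW.2⟩, .refl _⟩
  | a :: b :: l, x, y, ⟨hw, hx, hy⟩ => by
      obtain rfl : a = x := by simpa using hx
      obtain ⟨P, ⟨⟨hPw, hPnd⟩, hPb, hPy⟩, hParcs⟩ :=
        IsWalkFromTo.exists_isSimplePathFromTo (W := b :: l) ⟨hw.2, rfl, by simpa using hy⟩
      by_cases ha : a ∈ P
      · obtain ⟨s, t, rfl⟩ := List.append_of_mem ha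
        refine ⟨a :: t,
          ⟨⟨hPw.of_append_right (by simp), (List.nodup_append.1 hPnd).2.1⟩, rfl, ?_⟩, ?_⟩
        · rwa [List.getLast?_append_of_ne_nil _ (by simp)] at hPy
        · exact fun e he => mem_arcs_cons (hParcs (arcs_subset_arcs_append s _ he)) a
      · obtain ⟨c, P', rfl⟩ := List.exists_cons_of_ne_nil (l := P) (by rintro rfl; simp at hPb)
        obtain rfl : c = b := by simpa using hPb
        refine ⟨a :: c :: P',
          ⟨⟨⟨hw.1, hPw⟩, List.nodup_cons.2 ⟨ha, hPnd⟩⟩, rfl, by simpa using hPy⟩,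
          ?_⟩
        simp only [arcs_cons_cons]
        exact List.cons_subset_cons _ hParcs

lemma IsSimplePathFromTo.isSimpleCycle_cons {P : List V} {x y : V}
    (hP : G.IsSimplePathFromTo P y x) (hxy : G.Adj x y) : G.IsSimpleCycle (x :: P) := by
  obtain ⟨⟨hPw, hPnd⟩, hPy, hPx⟩ := hP
  obtain ⟨c, P', rfl⟩ := List.exists_cons_of_ne_nil (l := P) (by rintro rfl; simp at hPy)
  obtain rfl : c = y := by simpa using hPy
  refine ⟨⟨hxy, hPw⟩, by simp, by simpa using hPx.symm, ?_⟩
  obtain ⟨ys, hys⟩ := List.getLast?_eq_some_iff.1 hPx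
  rw [hys, List.nodup_append] at hPnd
  rw [hys, List.dropLast_cons_of_ne_nil (by simp), List.dropLast_concat, List.nodup_cons]
  exact ⟨fun hx => hPnd.2.2 x hx x (by simp) rfl, hPnd.1⟩

section Cactus

variable {K : Subgraph G}

lemma Subgraph.mem_verts_of_isWalk_cons : ∀ {a : V} {l : List V},
    K.toDirGraph.IsWalk (a :: l) → a ∈ K.verts → ∀ v ∈ a :: l, v ∈ K.verts
  | _, [], _, ha, _, hv => by rwa [List.mem_singleton.1 hv]
  | _, _ :: _, hw, ha, v, hv => by
      rcases List.mem_cons.1 hv with rfl | hv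
      · exact ha
      · exact Subgraph.mem_verts_of_isWalk_cons hw.2 (K.mem_right hw.1) v hv

lemma Subgraph.mem_verts_of_isWalkFromTo {q : List V} {x y : V}
    (hq : K.toDirGraph.IsWalkFromTo q x y) (hx : x ∈ K.verts) : ∀ v ∈ q, v ∈ K.verts := by
  obtain ⟨t, rfl⟩ := List.head?_eq_some_iff.1 hq.2.1
  exact Subgraph.mem_verts_of_isWalk_cons hq.1 hx

lemma Subgraph.IsCactus.adj_of_mem_arcs_isSimpleCycle (hG : G.CactusArcCond) (hK : K.IsCactus)
    {Z : List V} (hZ : G.IsSimpleCycle Z) {w x u v : V} (hwx : (w, x) ∈ arcs Z)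
    (hKwx : K.Adj w x) (huv : (u, v) ∈ arcs Z) : K.Adj u v := by
  obtain ⟨⟨c, hc, hwxc⟩, -⟩ := hK.2.2 w x hKwx
  have hcG : G.IsSimpleCycle c := ⟨hc.1.mono fun _ _ h => K.adj_sub h, hc.2⟩
  exact hc.1.adj_of_mem_arcs (((hG w x (K.adj_sub hKwx)).2 Z c hZ hwx hcG hwxc (u, v)).1 huv)

lemma Subgraph.IsCactus.mem_verts_of_adj_of_isWalkFromTo (hG : G.CactusArcCond)
    (hK : K.IsCactus) {x y z : V} {P : List V} (hxy : G.Adj x y) (hx : x ∈ K.verts)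
    (hz : z ∈ K.verts) (hP : G.IsWalkFromTo P y z) (hxP : x ∉ P) : y ∈ K.verts := by
  obtain ⟨q, hq⟩ := hK.2.1 z hz x hx
  obtain ⟨P', hP', hP'arcs⟩ :=
    (hP.append (hq.mono fun _ _ h => K.adj_sub h)).exists_isSimplePathFromTo
  have hyx : y ≠ x := by
    rintro rfl
    exact hxP (List.mem_of_mem_head? hP.2.1)
  obtain ⟨w, hwx⟩ :=
    exists_mem_arcs_of_getLast? (IsWalkFromTo.two_le_length ⟨hP'.1.1, hP'.2⟩ hyx) hP'.2.2
  have hwxq : (w, x) ∈ arcs q := by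
    have hP0 : P ≠ [] := by rintro rfl; exact hP.1
    have h := hP'arcs hwx
    rw [arcs_append hP0 (hP.2.2.trans hq.2.1.symm), List.mem_append] at h
    exact h.resolve_left fun h => hxP (mem_of_mem_arcs_right h)
  have hxyZ : (x, y) ∈ arcs (x :: P') := by
    obtain ⟨t, rfl⟩ := List.head?_eq_some_iff.1 hP'.2.1
    simp
  exact K.mem_right (hK.adj_of_mem_arcs_isSimpleCycle hG (hP'.isSimpleCycle_cons hxy)
    (mem_arcs_cons hwx x) (hq.1.adj_of_mem_arcs hwxq) hxyZ)

lemma Subgraph.IsCactus.getElem_mem_of_le_of_le (hG : G.CactusArcCond) (hK : K.IsCactus)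
    {p : List V} (hp : G.IsSimplePath p) {a b m : ℕ} (ham : a ≤ m) (hmb : m ≤ b)
    (hb : b < p.length) (ha : p[a] ∈ K.verts) (hb' : p[b] ∈ K.verts) : p[m] ∈ K.verts := by
  induction m, ham using Nat.le_induction with
  | base => exact ha
  | succ m ham ih =>
    refine hK.mem_verts_of_adj_of_isWalkFromTo hG (hp.1.adj_getElem (by omega))
      (ih (by omega) ha) hb' (hp.1.isWalkFromTo_take_drop (a := m + 1) hmb hb) fun hmem => ?_
    exact hp.2.getElem_notMem_drop (by omega) (List.take_subset _ _ hmem)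

lemma Subgraph.IsCactus.getElem_notMem_of_exit (hG : G.CactusArcCond) (hK : K.IsCactus)
    {p : List V} (hp : G.IsSimplePath p) {a b : ℕ} (hab : a < b) (hb : b < p.length)
    (ha : p[a] ∈ K.verts) (ha' : p[a + 1] ∉ K.verts) : p[b] ∉ K.verts :=
  fun hb' => ha' (hK.getElem_mem_of_le_of_le hG hp (by omega) hab hb ha hb')

end Cactus

section Rooted

variable {K : Subgraph G} {r v w : V}

lemma singleVert_isCactus (r : V) : (singleVert G r).IsCactus := by
  refine ⟨⟨r, rfl⟩, fun x (hx : x = r) y (hy : y = r) => ⟨[x], trivial, rfl, ?_⟩,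
    fun _ _ h => h.elim⟩
  rw [hx, hy]
  rfl

lemma mem_C_self (r v : V) : v ∈ (C G r v).verts := by
  unfold C
  split_ifs with h
  · exact h
  · exact fun _ _ hsub => hsub (by simp)

lemma C_verts_subset (hK : K.IsCactus) (hr : r ∈ K.verts) (hv : v ∈ K.verts) :
    (C G r v).verts ⊆ K.verts := by
  unfold C
  split_ifs
  · rintro u (rfl : u = r)
    exact hr
  · exact fun u hu => hu K hK (Set.insert_subset hr (Set.singleton_subset_iff.2 hv))

lemma exists_isCactus_of_notMem_C (hw : w ∉ (C G r v).verts) :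
    ∃ K : Subgraph G,
      K.IsCactus ∧ r ∈ K.verts ∧ (C G r v).verts ⊆ K.verts ∧ w ∉ K.verts := by
  unfold C at hw ⊢
  split_ifs at hw ⊢
  · exact ⟨singleVert G r, singleVert_isCactus r, rfl, subset_rfl, hw⟩
  · simp only [CsubOf, Set.mem_ofPred_eq, not_forall] at hw
    obtain ⟨K, hK, hsub, hwK⟩ := hw
    exact ⟨K, hK, hsub (by simp), fun u hu => hu K hK hsub, hwK⟩

lemma pre_of_forall (hw : w ≠ r)
    (h : ∀ H : Subgraph G, H.IsCactus → r ∈ H.verts → w ∈ H.verts → v ∈ H.verts) :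
    pre G r v w := by
  have hmono : ∀ H : Subgraph G, H.IsCactus → {r, w} ⊆ H.verts →
      ({r, v} : Set V) ⊆ H.verts :=
    fun H hH hrw => Set.insert_subset (hrw (by simp))
      (Set.singleton_subset_iff.2 (h H hH (hrw (by simp)) (hrw (by simp))))
  unfold pre C
  rw [if_neg hw]
  split_ifs
  · exact ⟨fun u (hu : u = r) _ _ hrw => hu ▸ hrw (by simp), fun _ _ h => h.elim⟩
  · exact ⟨fun u hu H hH hrw => hu H hH (hmono H hH hrw),
      fun _ _ h => ⟨h.1, fun H hH hrw => h.2 H hH (hmono H hH hrw)⟩⟩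

lemma pre_getElem_succ_of_exit (hG : G.CactusArcCond) (hK : K.IsCactus) (hr : r ∈ K.verts)
    {p : List V} (hp : G.IsSimplePath p) {k i : ℕ} (hki : k ≤ i) (hi : i + 1 < p.length)
    (hk : p[k] ∈ K.verts) (hk' : p[k + 1] ∉ K.verts) :
    pre G r (p[i]'(Nat.lt_of_succ_lt hi)) p[i + 1] := by
  have hout : p[i + 1] ∉ K.verts := hK.getElem_notMem_of_exit hG hp (by omega) hi hk hk'
  refine pre_of_forall (fun h => hout (h ▸ hr)) fun H hH hrH hH1 => ?_
  by_contra hHi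
  have hkH : p[k] ∉ H.verts := fun hkH =>
    hHi (hH.getElem_mem_of_le_of_le hG hp hki (by omega) hi hkH hH1)
  obtain ⟨Q, hQ⟩ := hH.2.1 _ hH1 r hrH
  refine hk' (hK.mem_verts_of_adj_of_isWalkFromTo hG (hp.1.adj_getElem (by omega)) hk hr
    ((hp.1.isWalkFromTo_take_drop (a := k + 1) (by omega) hi).append
      (hQ.mono fun _ _ h => H.adj_sub h)) ?_)
  rw [List.mem_append]
  rintro (h | h)
  · exact hp.2.getElem_notMem_drop (by omega) (List.take_subset _ _ h)
  · exact hkH (Subgraph.mem_verts_of_isWalkFromTo hQ hH1 _ (List.mem_of_mem_tail h))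

end Rooted

end DirGraph

open DirGraph in
/-- In the proof of the single-dipped lemma: if `(v_0, …, v_n)` is a simple
path with `v_0, …, v_k ∈ C(v_0)` and `v_{k+1} ∉ C(v_0)`, then
`v_k ≺ v_{k+1}` and `v_{k+1} ≼ v_{k+2} ≼ ⋯ ≼ v_n`. -/
theorem single_dipped_step {V : Type} (G : DirGraph V) (r : V)
    (hG : G.IsCactus) (vs : List V) (k : ℕ) (hk : k + 1 < vs.length)
    (hp : G.IsSimplePath vs)
    (hin : ∀ i (hi : i ≤ k), (vs[i]'(by omega)) ∈ (C G r (vs[0]'(by omega))).verts)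
    (hout : (vs[k+1]'hk) ∉ (C G r (vs[0]'(by omega))).verts) :
    (pre G r (vs[k]'(by omega)) (vs[k+1]'hk) ∧
      ¬ pre G r (vs[k+1]'hk) (vs[k]'(by omega))) ∧
    (∀ i, k + 1 ≤ i → (h : i + 1 < vs.length) →
      pre G r (vs[i]'(by omega)) (vs[i+1]'h)) := by
  obtain ⟨K, hK, hrK, hCK, hK'⟩ := exists_isCactus_of_notMem_C hout
  have hkK : vs[k] ∈ K.verts := hCK (hin k le_rfl)
  have hstep : ∀ i, k ≤ i → (h : i + 1 < vs.length) → pre G r vs[i] vs[i + 1] :=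
    fun i hki h => pre_getElem_succ_of_exit hG.2 hK hrK hp hki h hkK hK'
  refine ⟨⟨hstep k le_rfl hk, fun hpre => hK' ?_⟩, fun i hi h => hstep i (by omega) h⟩
  exact C_verts_subset hK hrK hkK (hpre.1 (mem_C_self r _))
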